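/- Fix ρ > 0, σ = ±1, s₁ ∈ ℂ, and a constant c ∈ ℝ. Along the line x = 2σρt + c (so η = c fixed, ξ = c + 4σρt), the first-order rational solution u₁ satisfies u₁(x,t) e^{−2iρ²t−iφ} → ρ[1 − (4ρ(c − s₁*) + 4iσ)/(2ρ(c − s₁*) + iσ)] as |t| → ∞, with error of order O(1/|t|). -/

import Mathlib

/-!
On the line `x = 2σρt + c` we have `η = c` and `ξ = c + 4σρt`, so after removing the phase,
`u₁/ρ = 1 - N/D` with `N = 2ρ(ξ + s₁)(A + iσ)` and `D = ρAξ + ρKc - (|K|² + 1)/2` both affine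
in `t`, where `A = 2ρ(c - s̄₁) + iσ`. Since `Im A = 2ρ Im s₁ + σ`, the nonsingularity condition
gives `A ≠ 0`, so `D` has nonzero slope and `N/D` tends to the ratio of the slopes `2(A + iσ)/A`
with error `O(1/|t|)`.
-/

open Complex Filter Asymptotics

/-- The first-order rational solution of the defocusing nonlocal NLS equation. -/
noncomputable def u1sol (ρ σ φ : ℝ) (s1 : ℂ) (x t : ℝ) : ℂ :=
  let K : ℂ := 2 * ρ * s1 + Complex.I * σ
  let ξ : ℂ := (x : ℂ) + 2 * σ * ρ * t
  let η : ℂ := (x : ℂ) - 2 * σ * ρ * t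
  (ρ : ℂ) * Complex.exp (2 * Complex.I * ρ ^ 2 * t + Complex.I * φ) *
    (1 - (2 * ρ * ξ + K - Complex.I * σ) * (2 * ρ * η - (starRingEnd ℂ) K + Complex.I * σ) /
      (2 * ρ ^ 2 * ξ * η + ρ * K * η - ρ * (starRingEnd ℂ) K * ξ
        - ((Complex.normSq K : ℂ) + 1) / 2))

section AffineRatio

variable {α 𝕜 : Type*} [NormedField 𝕜] {l : Filter α} {f : α → 𝕜}

theorem isBigO_affine (hf : Tendsto (‖f ·‖) l atTop) {r : 𝕜} (hr : r ≠ 0) (s : 𝕜) :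
    f =O[l] (fun x => r * f x + s) := by
  have hrf : Tendsto (fun x => ‖r * f x‖) l atTop := by
    simpa only [norm_mul] using hf.const_mul_atTop (norm_pos_iff.mpr hr)
  exact (isBigO_self_const_mul hr f l).trans
    (isLittleO_const_left.mpr (.inr hrf)).right_isBigO_add'

theorem eventually_ne_zero_of_tendsto_norm (hf : Tendsto (‖f ·‖) l atTop) :
    ∀ᶠ x in l, f x ≠ 0 :=
  (hf.eventually_gt_atTop 0).mono fun _ => norm_pos_iff.mp

theorem eventually_affine_ne_zero (hf : Tendsto (‖f ·‖) l atTop) {r : 𝕜} (hr : r ≠ 0) (s : 𝕜) :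
    ∀ᶠ x in l, r * f x + s ≠ 0 := by
  filter_upwards [(isBigO_affine hf hr s).eq_zero_imp, eventually_ne_zero_of_tendsto_norm hf]
    with x hzero hx using mt hzero hx

theorem isBigO_inv_affine (hf : Tendsto (‖f ·‖) l atTop) {r : 𝕜} (hr : r ≠ 0) (s : 𝕜) :
    (fun x => (r * f x + s)⁻¹) =O[l] (fun x => (f x)⁻¹) :=
  (isBigO_affine hf hr s).inv_rev <|
    (eventually_ne_zero_of_tendsto_norm hf).mono fun _ hx h0 => absurd h0 hx

theorem isBigO_affine_div_affine_sub (hf : Tendsto (‖f ·‖) l atTop) (p q : 𝕜) {r : 𝕜}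
    (hr : r ≠ 0) (s : 𝕜) :
    (fun x => (p * f x + q) / (r * f x + s) - p / r) =O[l] (fun x => (f x)⁻¹) := by
  refine ((isBigO_inv_affine hf hr s).const_mul_left ((q * r - p * s) / r)).congr' ?_ .rfl
  filter_upwards [eventually_affine_ne_zero hf hr s] with x hden
  field_simp
  ring

end AffineRatio

noncomputable def u1K (ρ σ : ℝ) (s1 : ℂ) : ℂ := 2 * ρ * s1 + I * σ

noncomputable def u1A (ρ σ c : ℝ) (s1 : ℂ) : ℂ := 2 * ρ * (c - (starRingEnd ℂ) s1) + I * σ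

theorem u1A_ne_zero {ρ σ c : ℝ} {s1 : ℂ} (hρ : ρ ≠ 0) (hs1 : s1.im ≠ -σ / (2 * ρ)) :
    u1A ρ σ c s1 ≠ 0 := by
  intro h
  have him : 2 * ρ * s1.im + σ = 0 := by
    simpa [u1A] using congrArg Complex.im h
  exact hs1 (by field_simp; linarith)

theorem u1sol_line_eq (ρ σ φ c : ℝ) (s1 : ℂ) (t : ℝ) :
    u1sol ρ σ φ s1 (2 * σ * ρ * t + c) t *
        exp (-(2 * I * ρ ^ 2 * t) - I * φ) =
      ρ * (1 - (8 * σ * ρ ^ 2 * (u1A ρ σ c s1 + I * σ) * t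
            + 2 * ρ * (c + s1) * (u1A ρ σ c s1 + I * σ)) /
          (4 * σ * ρ ^ 2 * u1A ρ σ c s1 * t
            + (ρ * u1A ρ σ c s1 * c + ρ * u1K ρ σ s1 * c - (normSq (u1K ρ σ s1) + 1) / 2))) := by
  have hphase : ∀ X : ℂ,
      ρ * exp (2 * I * ρ ^ 2 * t + I * φ) * X * exp (-(2 * I * ρ ^ 2 * t) - I * φ) = ρ * X := by
    intro X
    have h1 : exp (2 * I * ρ ^ 2 * t + I * φ) * exp (-(2 * I * ρ ^ 2 * t) - I * φ) = 1 := by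
      rw [← exp_add, ← exp_zero]
      ring_nf
    linear_combination (ρ * X) * h1
  simp only [u1sol, hphase, u1A, u1K, map_add, map_mul, map_ofNat, conj_ofReal, conj_I,
    ofReal_add, ofReal_mul, ofReal_ofNat]
  ring

/-- Along the line `x = 2σρt + c` (so `η = c` fixed), the first-order rational solution
converges as `|t| → ∞` to the first asymptotic soliton profile, with error `O(1/|t|)`. -/
theorem first_order_rational_asymptotic_soliton (ρ σ φ c : ℝ) (hρ : 0 < ρ)
    (hσ : σ = 1 ∨ σ = -1) (s1 : ℂ) (hs1 : s1.im ≠ -σ / (2 * ρ)) :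
    (fun t : ℝ =>
        u1sol ρ σ φ s1 (2 * σ * ρ * t + c) t *
          Complex.exp (-(2 * Complex.I * ρ ^ 2 * t) - Complex.I * φ)
        - (ρ : ℂ) * (1 - (4 * ρ * ((c : ℂ) - (starRingEnd ℂ) s1) + 4 * Complex.I * σ) /
            (2 * ρ * ((c : ℂ) - (starRingEnd ℂ) s1) + Complex.I * σ)))
      =O[Filter.cocompact ℝ] (fun t : ℝ => 1 / |t|) ∧
    Filter.Tendsto
      (fun t : ℝ =>
        u1sol ρ σ φ s1 (2 * σ * ρ * t + c) t *
          Complex.exp (-(2 * Complex.I * ρ ^ 2 * t) - Complex.I * φ))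
      (Filter.cocompact ℝ)
      (nhds ((ρ : ℂ) * (1 - (4 * ρ * ((c : ℂ) - (starRingEnd ℂ) s1) + 4 * Complex.I * σ) /
        (2 * ρ * ((c : ℂ) - (starRingEnd ℂ) s1) + Complex.I * σ)))) := by
  set A := u1A ρ σ c s1
  set K := u1K ρ σ s1
  have hA : A ≠ 0 := u1A_ne_zero hρ.ne' hs1
  have hσ0 : (σ : ℂ) ≠ 0 := by rcases hσ with rfl | rfl <;> norm_num
  have hρ0 : (ρ : ℂ) ≠ 0 := ofReal_ne_zero.mpr hρ.ne'
  have hr : 4 * σ * ρ ^ 2 * A ≠ 0 := by simp [hσ0, hρ0, hA]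
  have hlim : 8 * σ * ρ ^ 2 * (A + I * σ) / (4 * σ * ρ ^ 2 * A) =
      (4 * ρ * ((c : ℂ) - (starRingEnd ℂ) s1) + 4 * I * σ) /
        (2 * ρ * ((c : ℂ) - (starRingEnd ℂ) s1) + I * σ) := by
    rw [div_eq_div_iff hr (show 2 * ρ * ((c : ℂ) - (starRingEnd ℂ) s1) + I * σ ≠ 0 from hA)]
    simp only [A, u1A]
    ring
  have hnorm : Tendsto (fun t : ℝ => ‖(t : ℂ)‖) (cocompact ℝ) atTop := by
    simpa only [norm_real] using tendsto_norm_cocompact_atTop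
  have hinv : (fun t : ℝ => (t : ℂ)⁻¹) =O[cocompact ℝ] (fun t => 1 / |t|) :=
    isBigO_of_le _ fun t => by simp
  have hdecay : Tendsto (fun t : ℝ => 1 / |t|) (cocompact ℝ) (nhds 0) :=
    (tendsto_norm_cocompact_atTop (E := ℝ)).inv_tendsto_atTop.congr fun t => by simp
  refine (fun hbig => ⟨hbig, tendsto_sub_nhds_zero_iff.mp (hbig.trans_tendsto hdecay)⟩) ?_
  have hratio := isBigO_affine_div_affine_sub hnorm (8 * σ * ρ ^ 2 * (A + I * σ))
    (2 * ρ * (c + s1) * (A + I * σ)) hr (ρ * A * c + ρ * K * c - (normSq K + 1) / 2)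
  refine (hratio.const_mul_left (-(ρ : ℂ))).trans hinv |>.congr_left fun t => ?_
  rw [u1sol_line_eq, ← hlim]
  ring
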